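/- For all k ≥ 0 and 0 < l < k+1, the recursion value satisfies λ_β^i(k+1, l) = γ^{−(k+1−l)l}·[k+1 choose l]_γ·∏_{t=l+1}^{k+1}(β−γ^{t−1−i}) given that the same closed formula holds at step k; equivalently, the q-Pascal computation (β·γ^{−l} − γ^{k−i})·γ^{l}·[k choose l]_γ·∏_{t=l+1}^{k}(β−γ^{t−1−i}) + (β−γ^{l−1−i})·γ^{k+1−l}·[k choose l−1]_γ·∏_{t=l+1}^{k}(β−γ^{t−1−i}) = (β − γ^{k−i})·[k+1 choose l]_γ·∏_{t=l+1}^{k}(β−γ^{t−1−i}) holds. -/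
import Mathlib

/-- Gaussian (q-)binomial coefficients, via the q-Pascal recursion. -/
def qbinom {R : Type*} [CommRing R] (q : R) : ℕ → ℕ → R
  | _, 0 => 1
  | 0, _ + 1 => 0
  | k + 1, p + 1 => qbinom q k (p + 1) + q ^ (k - p) * qbinom q k p

lemma qbinom_zero {R : Type*} [CommRing R] (q : R) (k : ℕ) : qbinom q k 0 = 1 := by
  cases k <;> rfl

lemma qbinom_succ_succ {R : Type*} [CommRing R] (q : R) (k p : ℕ) :
    qbinom q (k + 1) (p + 1) = qbinom q k (p + 1) + q ^ (k - p) * qbinom q k p := rfl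

lemma qbinom_eq_zero {R : Type*} [CommRing R] (q : R) :
    ∀ k p : ℕ, k < p → qbinom q k p = 0 := by
  intro k
  induction k with
  | zero =>
    intro p hp
    cases p with
    | zero => omega
    | succ m => rfl
  | succ k ih =>
    intro p hp
    cases p with
    | zero => omega
    | succ m =>
      rw [qbinom_succ_succ, ih _ (by omega), ih _ (by omega)]; ring

lemma qbinom_diag {R : Type*} [CommRing R] (q : R) :
    ∀ k : ℕ, qbinom q k k = 1 := by
  intro k
  induction k with
  | zero => rfl
  | succ k ih =>
    rw [qbinom_succ_succ, qbinom_eq_zero q k (k+1) (by omega), ih, Nat.sub_self]; ring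

lemma qbinom_base1 {R : Type*} [CommRing R] (q : R) :
    ∀ k : ℕ, qbinom q (k+1) 1 = q * qbinom q k 1 + 1 := by
  intro k
  induction k with
  | zero =>
    rw [qbinom_succ_succ, qbinom_eq_zero q 0 1 (by omega), qbinom_zero]; ring
  | succ k ih =>
    conv_lhs => rw [qbinom_succ_succ, ih, qbinom_zero]
    conv_rhs => rw [qbinom_succ_succ, qbinom_zero]
    simp only [Nat.sub_zero]
    ring

lemma qbinom_pascal' {R : Type*} [CommRing R] (q : R) :
    ∀ p k : ℕ, p ≤ k →
      qbinom q (k+1) (p+1) = q ^ (p+1) * qbinom q k (p+1) + qbinom q k p := by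
  intro p
  induction p with
  | zero =>
    intro k _
    rw [qbinom_base1, qbinom_zero, pow_one]
  | succ p ihp =>
    intro k hk
    induction k with
    | zero => omega
    | succ k ihk =>
      rcases Nat.lt_or_ge (p+1) (k+1) with h | h
      · -- p + 1 ≤ k
        obtain ⟨d, rfl⟩ : ∃ d, k = p + 1 + d := ⟨k - (p+1), by omega⟩
        have hd1 := qbinom_succ_succ q (p+1+d+1) (p+1)
        have hd2 := qbinom_succ_succ q (p+1+d) (p+1)
        have hd3 := qbinom_succ_succ q (p+1+d) p
        rw [show p+1+d+1-(p+1) = d+1 from by omega] at hd1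
        rw [show p+1+d-(p+1) = d from by omega] at hd2
        rw [show p+1+d-p = d+1 from by omega] at hd3
        have h1 := ihk (by omega)
        have h2 := ihp (p+1+d) (by omega)
        linear_combination hd1 + h1 - q^(p+2)*hd2 + q^(d+1)*h2 - hd3
      · -- k = p
        have hz : qbinom q (k+1) (p+2) = 0 := qbinom_eq_zero q _ _ (by omega)
        have hdg1 : qbinom q (k+1+1) (p+1+1) = 1 := by
          rw [show p+1+1 = k+1+1 from by omega]; exact qbinom_diag q _
        have hdg2 : qbinom q (k+1) (p+1) = 1 := by
          rw [show p+1 = k+1 from by omega]; exact qbinom_diag q _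
        rw [hdg1, hdg2, hz]; ring

theorem inductive_step_identity {𝕜 : Type*} [Field 𝕜] [CharZero 𝕜] (n : ℕ) (hn : 1 ≤ n)
    (γ : 𝕜) (hγ : IsPrimitiveRoot γ n) (β : 𝕜) (hβ : β ≠ 0) (i : ℤ)
    (k l : ℕ) (hl : 0 < l) (hlk : l < k + 1) :
    (β * γ ^ (-(l : ℤ)) - γ ^ ((k : ℤ) - i)) * γ ^ l * qbinom γ k l
      + (β - γ ^ ((l : ℤ) - 1 - i)) * γ ^ (k + 1 - l) * qbinom γ k (l - 1)
      = (β - γ ^ ((k : ℤ) - i)) * qbinom γ (k + 1) l := by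
  have hγ0 : γ ≠ 0 := hγ.ne_zero (by omega)
  obtain ⟨m, rfl⟩ : ∃ m, l = m + 1 := ⟨l - 1, by omega⟩
  have hm : m < k := by omega
  have h1 : qbinom γ (k+1) (m+1) = qbinom γ k (m+1) + γ ^ (k - m) * qbinom γ k m :=
    qbinom_succ_succ γ k m
  have h2 : qbinom γ (k+1) (m+1) = γ ^ (m+1) * qbinom γ k (m+1) + qbinom γ k m :=
    qbinom_pascal' γ m k hm.le
  have hsub : k + 1 - (m + 1) = k - m := by omega
  rw [hsub, Nat.add_sub_cancel]
  have e1 : γ ^ (-((m+1 : ℕ) : ℤ)) * γ ^ (m+1) = 1 := by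
    rw [← zpow_natCast γ (m+1), ← zpow_add₀ hγ0,
      show -((m+1 : ℕ) : ℤ) + ((m+1 : ℕ) : ℤ) = 0 from by ring, zpow_zero]
  have e2 : γ ^ (((m+1 : ℕ) : ℤ) - 1 - i) * γ ^ (k - m) = γ ^ ((k : ℤ) - i) := by
    rw [← zpow_natCast γ (k - m), ← zpow_add₀ hγ0]
    congr 1
    push_cast [Nat.cast_sub hm.le]
    ring
  linear_combination (β * qbinom γ k (m+1)) * e1 - qbinom γ k m * e2 - β * h1
    + γ ^ ((k : ℤ) - i) * h2
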